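/- arXiv:1511.06901 — 2 statements merged into one kernel-verified Lean document; each statement's English description precedes it below -/
import Mathlib

section
/- Let A be the category whose objects are subspatial equivalence spans on T0 topological spaces, whose morphisms are graph homomorphisms (f1, f0), and which is quotiented by the relation identifying (f1, f0) and (g1, g0) : A → B whenever there exists a continuous h : A0 → B1 with e1∘h = f0 and e2∘h = g0. Then the assignment sending an object to the equilogical space (A0, R_A) (where R_A is the point relation of the span) and a class [(f1, f0)] to the class [f0] is a well-defined functor from A to the category Equ of equilogical spaces, and it is an equivalence of categories; in fact it is full, faithful and bijective on objects. -/
open CategoryTheory Topology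

/-- An equilogical space: a T0 topological space together with an equivalence
relation on its points. -/
structure EquSpace : Type 1 where
  carrier : Type
  [top : TopologicalSpace carrier]
  [t0 : T0Space carrier]
  eqv : Setoid carrier

attribute [instance] EquSpace.top EquSpace.t0

/-- A representative of a map of equilogical spaces: a continuous function
preserving the equivalence relations. -/
structure EquHomRep (E F : EquSpace) : Type where
  toFun : E.carrier → F.carrier
  continuous : Continuous toFun
  preserves : ∀ x y : E.carrier, E.eqv.r x y → F.eqv.r (toFun x) (toFun y)

/-- Two representatives are equivalent when they are pointwise related. -/
def equHomSetoid (E F : EquSpace) : Setoid (EquHomRep E F) where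
  r f g := ∀ x : E.carrier, F.eqv.r (f.toFun x) (g.toFun x)
  iseqv := by
    constructor
    · intro f x; exact F.eqv.refl _
    · intro f g h x; exact F.eqv.symm (h x)
    · intro f g h hfg hgh x; exact F.eqv.trans (hfg x) (hgh x)

/-- The identity representative. -/
def EquHomRep.id (E : EquSpace) : EquHomRep E E :=
  ⟨fun x => x, continuous_id, fun _ _ h => h⟩

/-- Composition of representatives. -/
def EquHomRep.comp {E F G : EquSpace} (f : EquHomRep E F) (g : EquHomRep F G) :
    EquHomRep E G :=
  ⟨fun x => g.toFun (f.toFun x), g.continuous.comp f.continuous,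
    fun _ _ h => g.preserves _ _ (f.preserves _ _ h)⟩

/-- The category `Equ` of equilogical spaces: maps are equivalence classes of
relation-preserving continuous functions. -/
instance : Category EquSpace where
  Hom E F := Quotient (equHomSetoid E F)
  id E := ⟦EquHomRep.id E⟧
  comp {E F G} f g :=
    Quotient.liftOn₂ f g (fun f g => ⟦f.comp g⟧) (by
      intro f g f' g' hf hg
      apply Quotient.sound
      intro x
      exact G.eqv.trans (hg _) (g'.preserves _ _ (hf x)))
  id_comp f := Quotient.inductionOn f fun _ => rfl
  comp_id f := Quotient.inductionOn f fun _ => rfl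
  assoc f g h := Quotient.inductionOn₃ f g h fun _ _ _ => rfl

/-! The category `A` of subspatial equivalence spans on T0 spaces.  Since for a
subspatial span `⟨d1, d2⟩ : A1 → A0 × A0` is a subspace inclusion, such a span
is given by a T0 space `A0` together with a subset `rel ⊆ A0 × A0` (carrying
the subspace topology) which is reflexive, symmetric and transitive — the
(unique, automatically continuous) structure maps `r`, `s`, `t` are then
`x ↦ (x,x)`, `(x,y) ↦ (y,x)` and `((x,y),(y,z)) ↦ (x,z)`, and the source and
target maps `d1`, `d2` are the restrictions of the two projections. -/

/-- A subspatial equivalence span on a T0 space. -/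
structure SubSpan : Type 1 where
  A0 : Type
  [top : TopologicalSpace A0]
  [t0 : T0Space A0]
  rel : Set (A0 × A0)
  hrefl : ∀ x : A0, (x, x) ∈ rel
  hsymm : ∀ {p : A0 × A0}, p ∈ rel → (p.2, p.1) ∈ rel
  htrans : ∀ {p q : A0 × A0}, p ∈ rel → q ∈ rel → p.2 = q.1 → (p.1, q.2) ∈ rel

attribute [instance] SubSpan.top SubSpan.t0

/-- A graph homomorphism of subspatial equivalence spans: a pair of continuous
maps commuting with sources and targets. -/
structure SpanHom (A B : SubSpan) : Type where
  f0 : A.A0 → B.A0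
  f1 : A.rel → B.rel
  cont0 : Continuous f0
  cont1 : Continuous f1
  comm1 : ∀ a : A.rel, (f1 a).1.1 = f0 a.1.1
  comm2 : ∀ a : A.rel, (f1 a).1.2 = f0 a.1.2

/-- The identity homomorphism. -/
def SpanHom.id (A : SubSpan) : SpanHom A A :=
  ⟨fun x => x, fun a => a, continuous_id, continuous_id, fun _ => rfl, fun _ => rfl⟩

/-- Composition of homomorphisms. -/
def SpanHom.comp {A B C : SubSpan} (f : SpanHom A B) (g : SpanHom B C) :
    SpanHom A C where
  f0 := fun x => g.f0 (f.f0 x)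
  f1 := fun a => g.f1 (f.f1 a)
  cont0 := g.cont0.comp f.cont0
  cont1 := g.cont1.comp f.cont1
  comm1 := fun a => (g.comm1 (f.f1 a)).trans (congrArg g.f0 (f.comm1 a))
  comm2 := fun a => (g.comm2 (f.f1 a)).trans (congrArg g.f0 (f.comm2 a))

/-- Two homomorphisms `(f1, f0)` and `(g1, g0)` are identified when there is a
continuous `h : A0 → B1` with `e1∘h = f0` and `e2∘h = g0`. -/
def spanHomSetoid (A B : SubSpan) : Setoid (SpanHom A B) where
  r f g := ∃ h : A.A0 → B.rel, Continuous h ∧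
    ∀ x : A.A0, (h x).1.1 = f.f0 x ∧ (h x).1.2 = g.f0 x
  iseqv := by
    constructor
    · intro f
      exact ⟨fun x => ⟨(f.f0 x, f.f0 x), B.hrefl _⟩,
        (f.cont0.prodMk f.cont0).subtype_mk _, fun x => ⟨rfl, rfl⟩⟩
    · rintro f g ⟨h, hc, he⟩
      have hv : Continuous fun x => (h x : B.A0 × B.A0) :=
        continuous_subtype_val.comp hc
      exact ⟨fun x => ⟨((h x).1.2, (h x).1.1), B.hsymm (h x).2⟩,
        (hv.snd.prodMk hv.fst).subtype_mk _,
        fun x => ⟨(he x).2, (he x).1⟩⟩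
    · rintro f g k ⟨h, hc, he⟩ ⟨h', hc', he'⟩
      have hv : Continuous fun x => (h x : B.A0 × B.A0) :=
        continuous_subtype_val.comp hc
      have hv' : Continuous fun x => (h' x : B.A0 × B.A0) :=
        continuous_subtype_val.comp hc'
      refine ⟨fun x => ⟨((h x).1.1, (h' x).1.2),
        B.htrans (h x).2 (h' x).2 (((he x).2).trans ((he' x).1).symm)⟩,
        (hv.fst.prodMk hv'.snd).subtype_mk _, fun x => ⟨(he x).1, (he' x).2⟩⟩

/-- The category `A`: subspatial equivalence spans on T0 spaces with classes
of graph homomorphisms. -/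
instance : Category SubSpan where
  Hom A B := Quotient (spanHomSetoid A B)
  id A := ⟦SpanHom.id A⟧
  comp {A B C} f g :=
    Quotient.liftOn₂ f g (fun f g => ⟦f.comp g⟧) (by
      intro f u f' u' hf hu
      apply Quotient.sound
      obtain ⟨h, hc, he⟩ := hf
      obtain ⟨k, kc, ke⟩ := hu
      refine (spanHomSetoid A C).trans (b := f'.comp u) ?_ ?_
      · refine ⟨fun x => u.f1 (h x), u.cont1.comp hc, fun x => ?_⟩
        exact ⟨(u.comm1 (h x)).trans (congrArg u.f0 (he x).1),
          (u.comm2 (h x)).trans (congrArg u.f0 (he x).2)⟩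
      · exact ⟨fun x => k (f'.f0 x), kc.comp f'.cont0,
          fun x => ⟨(ke (f'.f0 x)).1, (ke (f'.f0 x)).2⟩⟩)
  id_comp f := Quotient.inductionOn f fun _ => rfl
  comp_id f := Quotient.inductionOn f fun _ => rfl
  assoc f g h := Quotient.inductionOn₃ f g h fun _ _ _ => rfl

/-- The comparison functor `F : A ⥤ Equ` sending a subspatial equivalence
span to the equilogical space of its points with the point relation, and the
class of `(f1, f0)` to the class of `f0`. -/
def spanToEqu : SubSpan ⥤ EquSpace where
  obj A :=
    { carrier := A.A0
      eqv :=
        { r := fun x y => (x, y) ∈ A.rel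
          iseqv := ⟨fun x => A.hrefl x, fun h => A.hsymm h,
            fun h h' => A.htrans h h' rfl⟩ } }
  map {A B} f :=
    Quotient.map
      (fun f => ⟨f.f0, f.cont0, fun x y hxy => by
        have hb := (f.f1 ⟨(x, y), hxy⟩).2
        have h1 := f.comm1 ⟨(x, y), hxy⟩
        have h2 := f.comm2 ⟨(x, y), hxy⟩
        show (f.f0 x, f.f0 y) ∈ B.rel
        rw [← h1, ← h2]
        exact hb⟩)
      (by
        rintro f g ⟨h, hc, he⟩ x
        have hb := (h x).2
        show (f.f0 x, g.f0 x) ∈ B.rel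
        rw [← (he x).1, ← (he x).2]
        exact hb) f
  map_id A := by
    apply Quotient.sound
    intro x
    exact A.hrefl x
  map_comp {A B C} f g := by
    induction f using Quotient.inductionOn with
    | h f =>
      induction g using Quotient.inductionOn with
      | h g =>
        apply Quotient.sound
        intro x
        exact C.hrefl _

/-! Because the spans are subspatial, `A1` is the subspace `rel` of `A0 × A0`, so a continuous
map into `A1` is the same as a pair of continuous maps into `A0` whose values are related. Hence
`f1` is determined by `f0` and exists exactly when `f0` preserves the point relation, and two
homomorphisms are identified exactly when their `f0` components are pointwise related: this gives
fullness and faithfulness. On objects, a subspatial span is literally the same data as an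
equilogical space. -/

def SpanHom.ofMapsTo {A B : SubSpan} (f0 : A.A0 → B.A0) (hf0 : Continuous f0)
    (hrel : ∀ x y, (x, y) ∈ A.rel → (f0 x, f0 y) ∈ B.rel) : SpanHom A B where
  f0 := f0
  f1 := Set.MapsTo.restrict (Prod.map f0 f0) A.rel B.rel fun p hp => hrel p.1 p.2 hp
  cont0 := hf0
  cont1 := (hf0.prodMap hf0).restrict _
  comm1 _ := rfl
  comm2 _ := rfl

theorem spanHomSetoid_rel_of_forall_mem_rel {A B : SubSpan} {f g : SpanHom A B}
    (hfg : ∀ x, (f.f0 x, g.f0 x) ∈ B.rel) : spanHomSetoid A B f g :=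
  ⟨Set.codRestrict (fun x => (f.f0 x, g.f0 x)) B.rel hfg,
    (f.cont0.prodMk g.cont0).codRestrict hfg, fun _ => ⟨rfl, rfl⟩⟩

instance spanToEqu_full : spanToEqu.Full where
  map_surjective {_ _} := by
    rintro ⟨φ⟩
    exact ⟨⟦SpanHom.ofMapsTo φ.toFun φ.continuous φ.preserves⟧, rfl⟩

instance spanToEqu_faithful : spanToEqu.Faithful where
  map_injective {_ _} := by
    rintro ⟨f⟩ ⟨g⟩ hfg
    exact Quotient.sound (spanHomSetoid_rel_of_forall_mem_rel (Quotient.exact hfg))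

def EquSpace.toSubSpan (E : EquSpace) : SubSpan where
  A0 := E.carrier
  rel := {p | E.eqv.r p.1 p.2}
  hrefl := E.eqv.refl
  hsymm h := E.eqv.symm h
  htrans h h' he := E.eqv.trans h (he ▸ h')

theorem EquSpace.toSubSpan_spanToEqu_obj (A : SubSpan) : (spanToEqu.obj A).toSubSpan = A := rfl

theorem spanToEqu_obj_toSubSpan (E : EquSpace) : spanToEqu.obj E.toSubSpan = E := rfl

theorem spanToEqu_obj_bijective : Function.Bijective spanToEqu.obj :=
  Function.bijective_iff_has_inverse.mpr
    ⟨EquSpace.toSubSpan, EquSpace.toSubSpan_spanToEqu_obj, spanToEqu_obj_toSubSpan⟩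

/-- the functor `F : A ⥤ Equ` is well defined, full, faithful and
bijective on objects; in particular it is an equivalence of categories. -/
theorem spanToEqu_equivalence :
    spanToEqu.Full ∧ spanToEqu.Faithful ∧
    Function.Bijective spanToEqu.obj ∧ spanToEqu.IsEquivalence :=
  ⟨inferInstance, inferInstance, spanToEqu_obj_bijective,
    { essSurj := Functor.essSurj_of_surj spanToEqu_obj_bijective.2 }⟩
end

section
/- Let (e1, e2 : H1 → H0, r_H, t_H, s_H) be a groupoid in Set, and let d1, d2 : G1 → G0 with ⟨d1, d2⟩ injective and r, s, t satisfying the source/target equations, so that (G1 ⇉ G0, r, t, s) is a groupoid. Let (f1, f0) and (g1, g0) be functors from H to G. Then any function a : H0 → G1 with d1∘a = f0 and d2∘a = g0 is automatically a natural transformation from (f1, f0) to (g1, g0): for every h ∈ H1, t(f1(h), a(e2(h))) = t(a(e1(h)), g1(h)). -/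
/-- Source/target compatible structure maps on a graph of sets: identities
`r`, inversion `s`, and composition `t` defined on composable pairs, subject
only to the source/target equations. -/
structure SetSpanStruct {G1 G0 : Type} (d1 d2 : G1 → G0) where
  r : G0 → G1
  s : G1 → G1
  t : ∀ a b : G1, d2 a = d1 b → G1
  d1_r : ∀ x, d1 (r x) = x
  d2_r : ∀ x, d2 (r x) = x
  d1_s : ∀ a, d1 (s a) = d2 a
  d2_s : ∀ a, d2 (s a) = d1 a
  d1_t : ∀ a b h, d1 (t a b h) = d1 a
  d2_t : ∀ a b h, d2 (t a b h) = d2 b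

/-- The groupoid laws for such a structure: associativity, units, inverses,
and involutivity of inversion. -/
structure SetSpanStruct.IsGroupoid {G1 G0 : Type} {d1 d2 : G1 → G0}
    (S : SetSpanStruct d1 d2) : Prop where
  assoc : ∀ (a b c : G1) (hab : d2 a = d1 b) (hbc : d2 b = d1 c),
    S.t (S.t a b hab) c ((S.d2_t a b hab).trans hbc) =
    S.t a (S.t b c hbc) (hab.trans (S.d1_t b c hbc).symm)
  id_left : ∀ a : G1, S.t (S.r (d1 a)) a (S.d2_r (d1 a)) = a
  id_right : ∀ a : G1, S.t a (S.r (d2 a)) (S.d1_r (d2 a)).symm = a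
  inv_right : ∀ a : G1, S.t a (S.s a) (S.d1_s a).symm = S.r (d1 a)
  inv_left : ∀ a : G1, S.t (S.s a) a (S.d2_s a) = S.r (d2 a)
  inv_inv : ∀ a : G1, S.s (S.s a) = a

theorem SetSpanStruct.t_eq_t_of_injective {G1 G0 : Type} {d1 d2 : G1 → G0}
    (hinj : Function.Injective (fun a : G1 => (d1 a, d2 a))) (S : SetSpanStruct d1 d2)
    {a b a' b' : G1} (hab : d2 a = d1 b) (hab' : d2 a' = d1 b')
    (h1 : d1 a = d1 a') (h2 : d2 b = d2 b') :
    S.t a b hab = S.t a' b' hab' :=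
  hinj (Prod.ext ((S.d1_t a b hab).trans (h1.trans (S.d1_t a' b' hab').symm))
    ((S.d2_t a b hab).trans (h2.trans (S.d2_t a' b' hab').symm)))

theorem graph_transformation_is_natural_general {H1 H0 G1 G0 : Type}
    (e1 e2 : H1 → H0)
    (d1 d2 : G1 → G0)
    (hinj : Function.Injective (fun a : G1 => (d1 a, d2 a)))
    (SG : SetSpanStruct d1 d2)
    (f1 : H1 → G1) (f0 : H0 → G0)
    (hf1 : ∀ a, d1 (f1 a) = f0 (e1 a)) (hf2 : ∀ a, d2 (f1 a) = f0 (e2 a))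
    (g1 : H1 → G1) (g0 : H0 → G0)
    (hg1 : ∀ a, d1 (g1 a) = g0 (e1 a)) (hg2 : ∀ a, d2 (g1 a) = g0 (e2 a))
    (a : H0 → G1)
    (ha1 : ∀ x, d1 (a x) = f0 x) (ha2 : ∀ x, d2 (a x) = g0 x) :
    ∀ h : H1,
      SG.t (f1 h) (a (e2 h)) ((hf2 h).trans (ha1 (e2 h)).symm) =
      SG.t (a (e1 h)) (g1 h) ((ha2 (e1 h)).trans (hg1 h).symm) := fun h =>
  -- both composites are arrows from `f0 (e1 h)` to `g0 (e2 h)`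
  SG.t_eq_t_of_injective hinj _ _ ((hf1 h).trans (ha1 (e1 h)).symm)
    ((ha2 (e2 h)).trans (hg2 h).symm)

/-- let `H` be a groupoid in Set and `G` a jointly injective
structure (hence a groupoid); let `(f1, f0)` and `(g1, g0)` be functors from
`H` to `G`. Any function `a : H0 → G1` with `d1∘a = f0` and `d2∘a = g0` is
automatically a natural transformation: the naturality squares commute. -/
theorem graph_transformation_is_natural {H1 H0 G1 G0 : Type}
    (e1 e2 : H1 → H0) (SH : SetSpanStruct e1 e2) (hH : SH.IsGroupoid)
    (d1 d2 : G1 → G0)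
    (hinj : Function.Injective (fun a : G1 => (d1 a, d2 a)))
    (SG : SetSpanStruct d1 d2)
    (f1 : H1 → G1) (f0 : H0 → G0)
    (hf1 : ∀ a, d1 (f1 a) = f0 (e1 a)) (hf2 : ∀ a, d2 (f1 a) = f0 (e2 a))
    (hfr : ∀ x, f1 (SH.r x) = SG.r (f0 x))
    (hfs : ∀ a, f1 (SH.s a) = SG.s (f1 a))
    (hft : ∀ (a b : H1) (hab : e2 a = e1 b),
      f1 (SH.t a b hab) = SG.t (f1 a) (f1 b)
        ((hf2 a).trans ((congrArg f0 hab).trans (hf1 b).symm)))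
    (g1 : H1 → G1) (g0 : H0 → G0)
    (hg1 : ∀ a, d1 (g1 a) = g0 (e1 a)) (hg2 : ∀ a, d2 (g1 a) = g0 (e2 a))
    (hgr : ∀ x, g1 (SH.r x) = SG.r (g0 x))
    (hgs : ∀ a, g1 (SH.s a) = SG.s (g1 a))
    (hgt : ∀ (a b : H1) (hab : e2 a = e1 b),
      g1 (SH.t a b hab) = SG.t (g1 a) (g1 b)
        ((hg2 a).trans ((congrArg g0 hab).trans (hg1 b).symm)))
    (a : H0 → G1)
    (ha1 : ∀ x, d1 (a x) = f0 x) (ha2 : ∀ x, d2 (a x) = g0 x) :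
    ∀ h : H1,
      SG.t (f1 h) (a (e2 h)) ((hf2 h).trans (ha1 (e2 h)).symm) =
      SG.t (a (e1 h)) (g1 h) ((ha2 (e1 h)).trans (hg1 h).symm) :=
  graph_transformation_is_natural_general e1 e2 d1 d2 hinj SG f1 f0 hf1 hf2 g1 g0 hg1 hg2 a ha1 ha2
end
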